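/- (Per-block covariance bound for randomized indicators) Assume (A1), (B1) and (B2) with constant r, let α ∈ (0,1), and let G and G′ be two independent random permutations, each uniformly distributed on 𝒢 and independent of W. For b = 1, …, B define R_b(g, w) = 1{ p^(b)(gw) > c(α) }. Then for every block b, 0 ≤ E[ R_b(G, W) R_b(G′, W) ] − ( E[ R_b(G, W) ] )² ≤ ( log(1/(1−α)) · r² · m_B / B )². -/

import Mathlib

open scoped ENNReal

noncomputable section

/-- A multiple-testing framework with `m` hypotheses: data space `Ω` with distribution `Q`,
`p`-values `p j` taking values in the finite set `S ⊆ [0,1]`, set of true nulls `I`,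
a finite group `G` of measurable bijections of the data space, and a partition
`A 1, …, A B` of the hypotheses into blocks, each containing a true null. -/
structure Framework (m : ℕ) where
  Ω : Type
  [meas : MeasurableSpace Ω]
  Q : MeasureTheory.Measure Ω
  Qprob : MeasureTheory.IsProbabilityMeasure Q
  S : Finset ℝ
  hS : ∀ s ∈ S, 0 ≤ s ∧ s ≤ 1
  p : Fin m → Ω → ℝ
  p_meas : ∀ j, Measurable (p j)
  p_mem : ∀ j w, p j w ∈ S
  I : Finset (Fin m)
  G : Finset (Ω ≃ᵐ Ω)
  G_one : MeasurableEquiv.refl Ω ∈ G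
  G_mul : ∀ g ∈ G, ∀ g' ∈ G, g.trans g' ∈ G
  G_inv : ∀ g ∈ G, g.symm ∈ G
  B : ℕ
  B_pos : 0 < B
  A : Fin B → Finset (Fin m)
  A_disj : ∀ b b', b ≠ b' → Disjoint (A b) (A b')
  A_cover : ∀ j, ∃ b, j ∈ A b
  A_I : ∀ b, (A b ∩ I).Nonempty

attribute [instance] Framework.meas Framework.Qprob

open MeasureTheory ProbabilityTheory Filter

namespace Framework

variable {m : ℕ} (F : Framework m)

/-- Minimum of the `p`-values over the index set `J` (`1` by convention if `J = ∅`). -/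
def fmin (J : Finset (Fin m)) (w : F.Ω) : ℝ :=
  if h : J.Nonempty then J.inf' h (fun j => F.p j w) else 1

/-- `min_{j ∈ I} p_j(w)`, the minimal `p`-value over the true null hypotheses. -/
def nullMin : F.Ω → ℝ := F.fmin F.I

/-- `min_{1 ≤ j ≤ m} p_j(w)`, the minimal `p`-value over all hypotheses. -/
def fullMin : F.Ω → ℝ := F.fmin Finset.univ

/-- `p^(b)(w) = min_{j ∈ A_b ∩ I} p_j(w)`, the minimal null `p`-value in block `b`. -/
def blockMin (b : Fin F.B) : F.Ω → ℝ := F.fmin (F.A b ∩ F.I)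

/-- The permutation probability `P*(E)(w) = |G|⁻¹ ∑_{g ∈ G} 1{g w ∈ E}`. -/
def Pstar (E : Set F.Ω) (w : F.Ω) : ℝ :=
  (F.G.card : ℝ)⁻¹ * ∑ g ∈ F.G, E.indicator (fun _ => (1 : ℝ)) (g w)

/-- The oracle threshold `c(α) = max {s ∈ S : Q(min_{j ∈ I} p_j(W) ≤ s) ≤ α}`,
with `max ∅ := 0`. -/
def oracle (α : ℝ) : ℝ :=
  ((F.S.filter (fun s => (F.Q {w | F.nullMin w ≤ s}).toReal ≤ α)).max).unbotD 0

/-- The single-step Westfall--Young threshold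
`ĉ(α)(w) = max {s ∈ S : P*(min_{1≤j≤m} p_j(W) ≤ s)(w) ≤ α}`, with `max ∅ := 0`. -/
def wy (α : ℝ) (w : F.Ω) : ℝ :=
  ((F.S.filter (fun s => F.Pstar {w' | F.fullMin w' ≤ s} w ≤ α)).max).unbotD 0

/-- The maximal block size `m_B = max_b |A_b|`. -/
def mB : ℕ := Finset.univ.sup (fun b : Fin F.B => (F.A b).card)

/-- `π_b(c) = Q(p^(b)(W) ≤ c)`. -/
def piB (b : Fin F.B) (c : ℝ) : ℝ := (F.Q {w | F.blockMin b w ≤ c}).toReal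

/-- Assumption (A1): for every pair `g, g' ∈ G`, the random variables
`min (p^(b)(gW)) (p^(b)(g'W))`, `b = 1, …, B`, are mutually independent under `Q`. -/
def A1 : Prop :=
  ∀ g ∈ F.G, ∀ g' ∈ F.G,
    iIndepFun
      (fun b : Fin F.B => fun w => min (F.blockMin b (g w)) (F.blockMin b (g' w))) F.Q

/-- Assumption (B1): for `G` uniformly distributed on the permutation group and independent
of `W`, the joint distribution of `(p_j(GW))_{j ∈ I}` equals that of `(p_j(W))_{j ∈ I}`;
expressed as an equality between the uniform mixture of the pushforwards and the
pushforward of `Q` itself. -/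
def B1 : Prop :=
  (F.G.card : ℝ≥0∞)⁻¹ •
      (∑ g ∈ F.G, Measure.map (fun w => fun j : F.I => F.p j (g w)) F.Q)
    = Measure.map (fun w => fun j : F.I => F.p j w) F.Q

/-- Assumption (B2) with constant `r`:
`r⁻¹ s ≤ P*(p_j(W) ≤ s)(w) ≤ r s` for all `j`, all `s ∈ S` and all `w`. -/
def B2 (r : ℝ) : Prop :=
  ∀ j : Fin m, ∀ s ∈ F.S, ∀ w : F.Ω,
    r⁻¹ * s ≤ F.Pstar {w' | F.p j w' ≤ s} w ∧ F.Pstar {w' | F.p j w' ≤ s} w ≤ r * s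

/-- Assumption (B3): null `p`-values are uniformly distributed on `S`:
`Q(p_j(W) ≤ s) = s` for all `j ∈ I`, `s ∈ S`. -/
def B3 : Prop :=
  ∀ j ∈ F.I, ∀ s ∈ F.S, (F.Q {w | F.p j w ≤ s}).toReal = s

end Framework

/-!
Averaging over `G` and `G'` turns the covariance into `Var[Y]`, where
`Y(w) = P*(c(α) < p^(b))(w)` is the fraction of permutations under which block `b` is not
rejected; this gives nonnegativity. For the upper bound, a union bound over the nulls of block
`b` and (B2) give `1 - Y ≤ m_B · r · c(α)` pointwise, so Popoviciu's inequality bounds the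
variance by `(m_B r c(α))²`. Finally `c(α) ≤ r log(1/(1-α)) / B`: (B1) and the lower half of
(B2) give `Q(p^(b) ≤ c) ≥ c / r` for every block, while (A1) with `g = g' = id` makes the block
minima independent, so
`1 - α ≤ Q(min_I p > c) = ∏_b Q(p^(b) > c) ≤ (1 - c/r)^B ≤ e^{-Bc/r}`.
-/

open Finset

theorem variance_inv_card_mul_sum {Ω ι : Type*} [MeasurableSpace Ω] {μ : Measure Ω}
    [IsProbabilityMeasure μ] (s : Finset ι) {X : ι → Ω → ℝ}
    (hX : ∀ i ∈ s, MemLp (X i) 2 μ) :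
    Var[fun ω => (#s : ℝ)⁻¹ * ∑ i ∈ s, X i ω; μ] =
      ((#s : ℝ) ^ 2)⁻¹ * ∑ i ∈ s, ∑ j ∈ s, ∫ ω, X i ω * X j ω ∂μ -
        ((#s : ℝ)⁻¹ * ∑ i ∈ s, ∫ ω, X i ω ∂μ) ^ 2 := by
  have hmul : ∀ i ∈ s, ∀ j ∈ s, Integrable (fun ω => X i ω * X j ω) μ :=
    fun i hi j hj => (hX i hi).integrable_mul (hX j hj)
  rw [variance_eq_sub ((memLp_finsetSum s hX).const_mul _)]
  congr 1
  · simp_rw [Pi.pow_apply, mul_pow, sq (∑ i ∈ s, _), sum_mul_sum, integral_const_mul, inv_pow]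
    rw [integral_finsetSum _ fun i hi => integrable_finsetSum _ fun j hj => hmul i hi j hj]
    congr 1
    exact sum_congr rfl fun i hi => integral_finsetSum _ fun j hj => hmul i hi j hj
  · simp_rw [integral_const_mul]
    rw [integral_finsetSum _ fun i hi => (hX i hi).integrable one_le_two]

theorem measureReal_lt_eq_one_sub {Ω : Type*} [MeasurableSpace Ω] {μ : Measure Ω}
    [IsProbabilityMeasure μ] {f : Ω → ℝ} (hf : Measurable f) (c : ℝ) :
    μ.real {w | c < f w} = 1 - μ.real {w | f w ≤ c} := by
  rw [← probReal_compl_eq_one_sub (measurableSet_le hf measurable_const)]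
  congr 1
  ext w
  simp

theorem log_one_div_one_sub_nonneg {α : ℝ} (hα₀ : 0 ≤ α) (hα : α < 1) :
    0 ≤ Real.log (1 / (1 - α)) :=
  Real.log_nonneg (one_le_one_div (by linarith) (by linarith))

theorem mul_le_log_one_div_of_le_one_sub_pow {x α : ℝ} {n : ℕ} (hα : α < 1) (hx : x ≤ 1)
    (h : 1 - α ≤ (1 - x) ^ n) : n * x ≤ Real.log (1 / (1 - α)) := by
  have hexp : 1 - α ≤ Real.exp (-(n * x)) :=
    calc 1 - α ≤ (1 - x) ^ n := h
      _ ≤ Real.exp (-x) ^ n := pow_le_pow_left₀ (by linarith) (Real.one_sub_le_exp_neg x) n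
      _ = Real.exp (-(n * x)) := by rw [← Real.exp_nat_mul, mul_neg]
  rw [one_div, Real.log_inv, le_neg]
  simpa using Real.log_le_log (by linarith) hexp

namespace Framework

variable {m : ℕ} {F : Framework m} {r α : ℝ}

section Minima

variable {J : Finset (Fin m)}

theorem fmin_le_iff (hJ : J.Nonempty) {w : F.Ω} {c : ℝ} :
    F.fmin J w ≤ c ↔ ∃ j ∈ J, F.p j w ≤ c := by
  rw [fmin, dif_pos hJ, inf'_le_iff]

theorem lt_fmin_iff (hJ : J.Nonempty) {w : F.Ω} {c : ℝ} :
    c < F.fmin J w ↔ ∀ j ∈ J, c < F.p j w := by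
  rw [fmin, dif_pos hJ, lt_inf'_iff]

theorem measurable_fmin (J : Finset (Fin m)) : Measurable (F.fmin J) := by
  by_cases hJ : J.Nonempty
  · have h : F.fmin J = J.inf' hJ F.p :=
      funext fun w => by rw [fmin, dif_pos hJ, Finset.inf'_apply]
    rw [h]
    exact inf'_induction hJ _ (fun _ hf _ hg => hf.inf hg) fun j _ => F.p_meas j
  · have h : F.fmin J = fun _ => 1 := funext fun w => by rw [fmin, dif_neg hJ]
    rw [h]
    exact measurable_const

theorem measurable_blockMin (b : Fin F.B) : Measurable (F.blockMin b) :=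
  measurable_fmin _

theorem measurable_nullMin : Measurable F.nullMin :=
  measurable_fmin _

theorem I_nonempty : F.I.Nonempty :=
  (F.A_I ⟨0, F.B_pos⟩).mono inter_subset_right

theorem lt_nullMin_iff {w : F.Ω} {c : ℝ} : c < F.nullMin w ↔ ∀ b, c < F.blockMin b w := by
  simp only [nullMin, blockMin, lt_fmin_iff I_nonempty, lt_fmin_iff (F.A_I _), mem_inter]
  refine ⟨fun h b j hj => h j hj.2, fun h j hj => ?_⟩
  obtain ⟨b, hb⟩ := F.A_cover j
  exact h b j ⟨hb, hj⟩

theorem card_inter_le_mB (b : Fin F.B) : #(F.A b ∩ F.I) ≤ F.mB :=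
  (card_le_card inter_subset_left).trans (le_sup (f := fun b => #(F.A b)) (mem_univ b))

end Minima

section Pstar

theorem card_G_pos : 0 < #F.G :=
  card_pos.mpr ⟨_, F.G_one⟩

open scoped Classical in
theorem Pstar_eq_card (E : Set F.Ω) (w : F.Ω) :
    F.Pstar E w = (#F.G : ℝ)⁻¹ * #{g ∈ F.G | g w ∈ E} := by
  simp [Pstar, Set.indicator_apply, sum_boole]

theorem Pstar_nonneg (E : Set F.Ω) (w : F.Ω) : 0 ≤ F.Pstar E w := by
  rw [Pstar_eq_card]
  positivity

theorem Pstar_compl (E : Set F.Ω) (w : F.Ω) : F.Pstar Eᶜ w = 1 - F.Pstar E w := by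
  classical
  have hG : (#F.G : ℝ) ≠ 0 := by exact_mod_cast card_G_pos.ne'
  have hcard := card_filter_add_card_filter_not (s := F.G) (fun g => g w ∈ E)
  simp only [Pstar_eq_card, Set.mem_compl_iff]
  rw [eq_sub_iff_add_eq, ← mul_add, ← Nat.cast_add, add_comm, hcard, inv_mul_cancel₀ hG]

theorem Pstar_le_one (E : Set F.Ω) (w : F.Ω) : F.Pstar E w ≤ 1 := by
  linarith [Pstar_compl E w, Pstar_nonneg Eᶜ w]

theorem Pstar_le_sum {ι : Type*} {E : Set F.Ω} {J : Finset ι} {E' : ι → Set F.Ω}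
    (hE : E ⊆ ⋃ j ∈ J, E' j) (w : F.Ω) : F.Pstar E w ≤ ∑ j ∈ J, F.Pstar (E' j) w := by
  classical
  simp only [Pstar_eq_card, ← mul_sum]
  gcongr
  norm_cast
  refine (card_le_card fun g hg => ?_).trans card_biUnion_le
  obtain ⟨hgG, hgE⟩ := mem_filter.mp hg
  obtain ⟨j, hj, hgj⟩ := Set.mem_iUnion₂.mp (hE hgE)
  exact mem_biUnion.mpr ⟨j, hj, mem_filter.mpr ⟨hgG, hgj⟩⟩

theorem measurable_Pstar {E : Set F.Ω} (hE : MeasurableSet E) : Measurable (F.Pstar E) :=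
  (Finset.measurable_sum _ fun g _ => (measurable_const.indicator hE).comp g.measurable).const_mul _

theorem integrable_Pstar {E : Set F.Ω} (hE : MeasurableSet E) : Integrable (F.Pstar E) F.Q :=
  (memLp_of_bounded (ae_of_all _ fun w => ⟨Pstar_nonneg E w, Pstar_le_one E w⟩)
    (measurable_Pstar hE).aestronglyMeasurable 1).integrable le_rfl

theorem integral_Pstar {E : Set F.Ω} (hE : MeasurableSet E) :
    ∫ w, F.Pstar E w ∂F.Q = (#F.G : ℝ)⁻¹ * ∑ g ∈ F.G, F.Q.real (g ⁻¹' E) := by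
  have hpre : ∀ g : F.Ω ≃ᵐ F.Ω, (fun w => E.indicator (fun _ => (1 : ℝ)) (g w)) =
      (g ⁻¹' E).indicator 1 := fun g => rfl
  simp_rw [Pstar, integral_const_mul]
  rw [integral_finsetSum _ fun g _ =>
    hpre g ▸ (integrable_const 1).indicator (hE.preimage g.measurable)]
  simp_rw [hpre]
  exact congrArg _ (sum_congr rfl fun g _ => integral_indicator_one (hE.preimage g.measurable))

end Pstar

theorem B1.measureReal_le_eq_integral_Pstar (hB1 : F.B1) {j : Fin m} (hj : j ∈ F.I) (c : ℝ) :
    F.Q.real {w | F.p j w ≤ c} = ∫ w, F.Pstar {w | F.p j w ≤ c} w ∂F.Q := by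
  have hE : MeasurableSet {w | F.p j w ≤ c} := measurableSet_le (F.p_meas j) measurable_const
  have hT : MeasurableSet {x : F.I → ℝ | x ⟨j, hj⟩ ≤ c} :=
    measurableSet_le (measurable_pi_apply _) measurable_const
  have hmeas : ∀ g : F.Ω ≃ᵐ F.Ω, Measurable fun w (i : F.I) => F.p i (g w) :=
    fun g => measurable_pi_lambda _ fun i => (F.p_meas i).comp g.measurable
  have hmeas₀ : Measurable fun w (i : F.I) => F.p i w :=
    measurable_pi_lambda _ fun i => F.p_meas i
  have h := congrArg (fun μ : Measure (F.I → ℝ) => μ.real {x | x ⟨j, hj⟩ ≤ c}) hB1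
  simp only [measureReal_def, Measure.smul_apply, Measure.finsetSum_apply,
    Measure.map_apply (hmeas _) hT, Measure.map_apply hmeas₀ hT, smul_eq_mul, ENNReal.toReal_mul,
    ENNReal.toReal_inv, ENNReal.toReal_natCast,
    ENNReal.toReal_sum fun _ _ => measure_ne_top _ _] at h
  rw [integral_Pstar hE]
  exact h.symm

theorem B2.Pstar_le_mul (hB2 : F.B2 r) (j : Fin m) {c : ℝ} (hc : c = 0 ∨ c ∈ F.S) (w : F.Ω) :
    F.Pstar {w | F.p j w ≤ c} w ≤ r * c := by
  rcases hc with rfl | hc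
  -- `c = 0` is the value of `max ∅`, and `0` need not lie in `S`.
  · by_cases h : ∃ g ∈ F.G, F.p j (g w) ≤ 0
    · obtain ⟨g, -, hg⟩ := h
      have h0 : F.p j (g w) = 0 := le_antisymm hg (F.hS _ (F.p_mem j (g w))).1
      exact (hB2 j 0 (h0 ▸ F.p_mem j (g w)) w).2
    · push Not at h
      simp only [Pstar_eq_card, Set.mem_ofPred_eq]
      rw [filter_false_of_mem fun g hg => not_le.mpr (h g hg)]
      simp
  · exact (hB2 j c hc w).2

theorem inv_mul_le_measureReal_blockMin_le (hB1 : F.B1) (hB2 : F.B2 r) {s : ℝ} (hs : s ∈ F.S)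
    (b : Fin F.B) : r⁻¹ * s ≤ F.Q.real {w | F.blockMin b w ≤ s} := by
  obtain ⟨j, hj⟩ := F.A_I b
  have hE : MeasurableSet {w | F.p j w ≤ s} := measurableSet_le (F.p_meas j) measurable_const
  calc r⁻¹ * s = ∫ _, r⁻¹ * s ∂F.Q := by simp
    _ ≤ ∫ w, F.Pstar {w | F.p j w ≤ s} w ∂F.Q :=
      integral_mono (integrable_const _) (integrable_Pstar hE) fun w => (hB2 j s hs w).1
    _ = F.Q.real {w | F.p j w ≤ s} :=
      (hB1.measureReal_le_eq_integral_Pstar (mem_inter.mp hj).2 s).symm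
    _ ≤ F.Q.real {w | F.blockMin b w ≤ s} :=
      measureReal_mono fun w hw => (fmin_le_iff (F.A_I b)).mpr ⟨j, hj, hw⟩

theorem measureReal_lt_nullMin_eq_prod (hA1 : F.A1) (c : ℝ) :
    F.Q.real {w | c < F.nullMin w} = ∏ b, F.Q.real {w | c < F.blockMin b w} := by
  have hind : iIndepFun F.blockMin F.Q := by simpa using hA1 _ F.G_one _ F.G_one
  have hinter : {w | c < F.nullMin w} =
      ⋂ b ∈ (univ : Finset (Fin F.B)), F.blockMin b ⁻¹' Set.Ioi c := by
    ext w
    simp [lt_nullMin_iff]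
  rw [hinter, measureReal_def, hind.measure_inter_preimage_eq_mul univ fun _ _ => measurableSet_Ioi,
    ENNReal.toReal_prod]
  rfl

theorem oracle_eq_zero_or_mem (α : ℝ) :
    F.oracle α = 0 ∨
      F.oracle α ∈ F.S ∧ F.Q.real {w | F.nullMin w ≤ F.oracle α} ≤ α := by
  unfold oracle
  cases hmax : (F.S.filter fun s => (F.Q {w | F.nullMin w ≤ s}).toReal ≤ α).max with
  | bot => exact Or.inl rfl
  | coe c => exact Or.inr (mem_filter.mp (mem_of_max hmax))

theorem oracle_nonneg (α : ℝ) : 0 ≤ F.oracle α := by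
  rcases oracle_eq_zero_or_mem (F := F) α with h | ⟨h, -⟩
  · exact h.ge
  · exact (F.hS _ h).1

theorem oracle_le (hA1 : F.A1) (hB1 : F.B1) (hB2 : F.B2 r) (hα₀ : 0 ≤ α) (hα : α < 1)
    (hr : 0 < r) : F.oracle α ≤ r * Real.log (1 / (1 - α)) / F.B := by
  have hlog := log_one_div_one_sub_nonneg hα₀ hα
  rcases oracle_eq_zero_or_mem (F := F) α with h | ⟨hS, hQ⟩
  · rw [h]
    positivity
  set c := F.oracle α
  have hblock : ∀ b, F.Q.real {w | c < F.blockMin b w} ≤ 1 - r⁻¹ * c := fun b => by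
    rw [measureReal_lt_eq_one_sub (measurable_blockMin b)]
    linarith [inv_mul_le_measureReal_blockMin_le hB1 hB2 hS b]
  have hpow : 1 - α ≤ (1 - r⁻¹ * c) ^ F.B :=
    calc 1 - α ≤ F.Q.real {w | c < F.nullMin w} := by
          rw [measureReal_lt_eq_one_sub measurable_nullMin]
          linarith
      _ = ∏ b, F.Q.real {w | c < F.blockMin b w} := measureReal_lt_nullMin_eq_prod hA1 c
      _ ≤ ∏ _b : Fin F.B, (1 - r⁻¹ * c) :=
          prod_le_prod (fun _ _ => measureReal_nonneg) fun b _ => hblock b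
      _ = (1 - r⁻¹ * c) ^ F.B := by simp
  have hx : r⁻¹ * c ≤ 1 := by
    linarith [hblock ⟨0, F.B_pos⟩,
      measureReal_nonneg (μ := F.Q) (s := {w | c < F.blockMin ⟨0, F.B_pos⟩ w})]
  have hBc := mul_le_log_one_div_of_le_one_sub_pow hα hx hpow
  have hB : (0 : ℝ) < F.B := by exact_mod_cast F.B_pos
  rw [le_div_iff₀ hB]
  calc c * F.B = r * (F.B * (r⁻¹ * c)) := by field_simp
    _ ≤ r * Real.log (1 / (1 - α)) := by gcongr

theorem Pstar_le_oracle (hA1 : F.A1) (hB1 : F.B1) (hB2 : F.B2 r) (hα₀ : 0 ≤ α) (hα : α < 1)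
    (j : Fin m) (w : F.Ω) :
    F.Pstar {w | F.p j w ≤ F.oracle α} w ≤ Real.log (1 / (1 - α)) * r ^ 2 / F.B := by
  have hlog := log_one_div_one_sub_nonneg hα₀ hα
  have hP := hB2.Pstar_le_mul j ((oracle_eq_zero_or_mem α).imp_right And.left) w
  rcases le_or_gt r 0 with hr | hr
  · calc _ ≤ r * F.oracle α := hP
      _ ≤ 0 := mul_nonpos_of_nonpos_of_nonneg hr (oracle_nonneg α)
      _ ≤ _ := by positivity
  · calc _ ≤ r * F.oracle α := hP
      _ ≤ r * (r * Real.log (1 / (1 - α)) / F.B) := by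
          gcongr
          exact oracle_le hA1 hB1 hB2 hα₀ hα hr
      _ = _ := by ring

theorem Pstar_blockMin_le_oracle (hA1 : F.A1) (hB1 : F.B1) (hB2 : F.B2 r) (hα₀ : 0 ≤ α)
    (hα : α < 1) (b : Fin F.B) (w : F.Ω) :
    F.Pstar {w | F.blockMin b w ≤ F.oracle α} w ≤
      Real.log (1 / (1 - α)) * r ^ 2 * F.mB / F.B := by
  have hK : 0 ≤ Real.log (1 / (1 - α)) * r ^ 2 / F.B := by
    have := log_one_div_one_sub_nonneg hα₀ hα
    positivity
  have hcover : {w | F.blockMin b w ≤ F.oracle α} ⊆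
      ⋃ j ∈ F.A b ∩ F.I, {w | F.p j w ≤ F.oracle α} := fun v hv => by
    obtain ⟨j, hj, hle⟩ := (fmin_le_iff (F.A_I b)).mp hv
    exact Set.mem_iUnion₂.mpr ⟨j, hj, hle⟩
  calc _ ≤ ∑ j ∈ F.A b ∩ F.I, F.Pstar {w | F.p j w ≤ F.oracle α} w :=
        Pstar_le_sum hcover w
    _ ≤ ∑ _j ∈ F.A b ∩ F.I, Real.log (1 / (1 - α)) * r ^ 2 / F.B :=
        sum_le_sum fun j _ => Pstar_le_oracle hA1 hB1 hB2 hα₀ hα j w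
    _ ≤ F.mB * (Real.log (1 / (1 - α)) * r ^ 2 / F.B) := by
        rw [sum_const, nsmul_eq_mul]
        gcongr
        exact_mod_cast card_inter_le_mB b
    _ = _ := by ring

end Framework

/-- The expectations over `(G, G', W)` are written as uniform averages over `𝒢 × 𝒢`
of integrals with respect to `Q`. -/
theorem per_block_covariance_bound
    {m : ℕ} (F : Framework m) (r : ℝ)
    (hA1 : F.A1) (hB1 : F.B1) (hB2 : F.B2 r)
    (α : ℝ) (hα : α ∈ Set.Ioo (0 : ℝ) 1) (b : Fin F.B) :
    0 ≤ (((F.G.card : ℝ) ^ 2)⁻¹ *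
          ∑ g ∈ F.G, ∑ g' ∈ F.G, ∫ w,
            (if F.oracle α < F.blockMin b (g w) then (1 : ℝ) else 0) *
            (if F.oracle α < F.blockMin b (g' w) then (1 : ℝ) else 0) ∂F.Q) -
        ((F.G.card : ℝ)⁻¹ *
          ∑ g ∈ F.G, ∫ w,
            (if F.oracle α < F.blockMin b (g w) then (1 : ℝ) else 0) ∂F.Q) ^ 2 ∧
      (((F.G.card : ℝ) ^ 2)⁻¹ *
          ∑ g ∈ F.G, ∑ g' ∈ F.G, ∫ w,
            (if F.oracle α < F.blockMin b (g w) then (1 : ℝ) else 0) *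
            (if F.oracle α < F.blockMin b (g' w) then (1 : ℝ) else 0) ∂F.Q) -
        ((F.G.card : ℝ)⁻¹ *
          ∑ g ∈ F.G, ∫ w,
            (if F.oracle α < F.blockMin b (g w) then (1 : ℝ) else 0) ∂F.Q) ^ 2
      ≤ (Real.log (1 / (1 - α)) * r ^ 2 * (F.mB : ℝ) / (F.B : ℝ)) ^ 2 := by
  obtain ⟨hα₀, hα₁⟩ := hα
  set c := F.oracle α
  set K := Real.log (1 / (1 - α)) * r ^ 2 * (F.mB : ℝ) / (F.B : ℝ)
  set E : Set F.Ω := {w | c < F.blockMin b w}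
  have hE : MeasurableSet E := measurableSet_lt measurable_const (F.measurable_blockMin b)
  have hX : ∀ g ∈ F.G, MemLp (fun w => if c < F.blockMin b (g w) then (1 : ℝ) else 0) 2 F.Q :=
    fun g _ => memLp_of_bounded (a := 0) (b := 1) (ae_of_all _ fun w => by split_ifs <;> simp)
      ((measurable_const.ite (hE.preimage g.measurable) measurable_const).aestronglyMeasurable) 2
  have hY : (fun w => (#F.G : ℝ)⁻¹ * ∑ g ∈ F.G,
      if c < F.blockMin b (g w) then (1 : ℝ) else 0) = F.Pstar E := by
    ext w
    simp [E, Framework.Pstar_eq_card]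
  rw [← variance_inv_card_mul_sum F.G hX, hY]
  refine ⟨variance_nonneg _ _, ?_⟩
  have hbdd : ∀ w, F.Pstar E w ∈ Set.Icc (1 - K) 1 := fun w => by
    have hcompl := Framework.Pstar_compl E w
    simp only [E, Set.compl_ofPred, not_lt] at hcompl
    exact ⟨by linarith [Framework.Pstar_blockMin_le_oracle hA1 hB1 hB2 hα₀.le hα₁ b w],
      Framework.Pstar_le_one E w⟩
  calc _ ≤ ((1 - (1 - K)) / 2) ^ 2 :=
        variance_le_sq_of_bounded (ae_of_all _ hbdd) (Framework.measurable_Pstar hE).aemeasurable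
    _ ≤ K ^ 2 := by nlinarith [sq_nonneg K]
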